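/- (Theorem 1, decrease of expected pre-activation) Let μ be a probability measure on ℝⁿ with ∫ x dμ(x) = 0 and with x ↦ ⟨v, x⟩ integrable for every v ∈ ℝⁿ. Fix w ∈ ℝⁿ, b ∈ ℝ and define the pre-activation a(x) = ⟨w, x⟩ + b. Let the updated pre-activation after one gradient step be a⁺(x) = a(x) − η·⟨g_W, x⟩ − η·(g_J + λ·g_R), where η > 0 is the step size, λ > 0, g_W ∈ ℝⁿ is arbitrary, and the scalars g_J, g_R satisfy |g_J| ≤ 2 σ_r √n ‖w‖₂ and λ·g_R > 2 σ_r √n ‖w‖₂. Then ∫ a⁺(x) dμ(x) < ∫ a(x) dμ(x). -/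
import Mathlib


open MeasureTheory
open scoped RealInnerProductSpace

/-- Theorem 1 (decrease of expected pre-activation): if the data distribution has mean zero,
`|g_J| ≤ 2 σ_r √n ‖w‖` and `λ·g_R > 2 σ_r √n ‖w‖`, then one gradient step strictly decreases
the expected pre-activation `∫ (⟨w,x⟩ + b) dμ`. -/
theorem expected_preactivation_decreases {n : ℕ}
    (μ : Measure (EuclideanSpace ℝ (Fin n))) [IsProbabilityMeasure μ]
    (hintegrable : ∀ v : EuclideanSpace ℝ (Fin n),
      Integrable (fun x => ⟪v, x⟫) μ)
    (hmean : ∫ x, x ∂μ = 0)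
    (w gW : EuclideanSpace ℝ (Fin n)) (b : ℝ)
    (η lam gJ gR σr : ℝ) (hη : 0 < η) (hlam : 0 < lam)
    (hgJ : |gJ| ≤ 2 * σr * Real.sqrt n * ‖w‖)
    (hgR : lam * gR > 2 * σr * Real.sqrt n * ‖w‖) :
    ∫ x, ((⟪w, x⟫ + b) - η * ⟪gW, x⟫ - η * (gJ + lam * gR)) ∂μ <
      ∫ x, (⟪w, x⟫ + b) ∂μ := by
  -- integrability of the identity
  have hid : Integrable (fun x : EuclideanSpace ℝ (Fin n) => x) μ := by
    have hcoord : ∀ i : Fin n,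
        Integrable (fun x : EuclideanSpace ℝ (Fin n) => |x i|) μ := by
      intro i
      have := (hintegrable (EuclideanSpace.single i 1)).abs
      simpa [EuclideanSpace.inner_single_left] using this
    have hsum : Integrable
        (fun x : EuclideanSpace ℝ (Fin n) => ∑ i, |x i|) μ :=
      integrable_finset_sum _ (fun i _ => hcoord i)
    refine hsum.mono' ?_ ?_
    · -- measurability
      exact (aestronglyMeasurable_id)
    · refine Filter.Eventually.of_forall (fun x => ?_)
      have : ‖x‖ ≤ ∑ i, |x i| := by
        rw [EuclideanSpace.norm_eq]
        calc Real.sqrt (∑ i, ‖x i‖ ^ 2) ≤ Real.sqrt ((∑ i, |x i|) ^ 2) := by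
              apply Real.sqrt_le_sqrt
              calc ∑ i, ‖x i‖ ^ 2 = ∑ i, |x i| ^ 2 := by simp [Real.norm_eq_abs]
                _ ≤ (∑ i, |x i|) ^ 2 := by
                    apply Finset.sum_sq_le_sq_sum_of_nonneg
                    intro i _; exact abs_nonneg _
          _ = ∑ i, |x i| := Real.sqrt_sq (Finset.sum_nonneg fun i _ => abs_nonneg _)
      simpa [Real.norm_eq_abs, abs_of_nonneg (Finset.sum_nonneg fun i _ => abs_nonneg (x i))]
        using this
  have hzero : ∀ v : EuclideanSpace ℝ (Fin n), ∫ x, ⟪v, x⟫ ∂μ = 0 := by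
    intro v
    rw [integral_inner hid, hmean, inner_zero_right]
  have hint1 : Integrable (fun x : EuclideanSpace ℝ (Fin n) => ⟪w, x⟫ + b) μ :=
    (hintegrable w).add (integrable_const b)
  have key : ∫ x, ((⟪w, x⟫ + b) - η * ⟪gW, x⟫ - η * (gJ + lam * gR)) ∂μ
      = (∫ x, (⟪w, x⟫ + b) ∂μ) - η * (gJ + lam * gR) := by
    have h2 : Integrable (fun x : EuclideanSpace ℝ (Fin n) => (⟪w, x⟫ + b) - η * ⟪gW, x⟫) μ :=
      hint1.sub ((hintegrable gW).const_mul η)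
    have e1 : ∫ x, ((⟪w, x⟫ + b) - η * ⟪gW, x⟫ - η * (gJ + lam * gR)) ∂μ
        = (∫ x, ((⟪w, x⟫ + b) - η * ⟪gW, x⟫) ∂μ)
          - ∫ _x, (η * (gJ + lam * gR) : ℝ) ∂μ :=
      integral_sub h2 (integrable_const _)
    have e2 : ∫ x, ((⟪w, x⟫ + b) - η * ⟪gW, x⟫) ∂μ
        = (∫ x, (⟪w, x⟫ + b) ∂μ) - ∫ x, η * ⟪gW, x⟫ ∂μ :=
      integral_sub hint1 ((hintegrable gW).const_mul η)
    rw [e1, e2, MeasureTheory.integral_const_mul, hzero, integral_const]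
    simp
  rw [key]
  have hpos : 0 < gJ + lam * gR := by
    have h1 : -(2 * σr * Real.sqrt n * ‖w‖) ≤ gJ := neg_le_of_abs_le hgJ
    linarith
  nlinarith
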